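/- Let $\{v_1, \ldots, v_m\}$ be a reduced basis of a lattice in $\mathbb{R}^m$, with Gram–Schmidt orthonormal basis $\{\phi_1,\ldots,\phi_m\}$ and Gram–Schmidt lengths $a_j = \mathrm{dist}(v_j, \mathrm{span}\{v_1,\ldots,v_{j-1}\})$. Then $\frac{\sqrt{3}}{2} a_j \le a_{j+1}$ for all $j = 1, \ldots, m-1$. -/

import Mathlib

open RealInnerProductSpace

/-- The span of the first `j` vectors (indices `< j`). -/
noncomputable def gsSpan (m : ℕ) (v : Fin m → EuclideanSpace ℝ (Fin m)) (j : Fin m) :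
    Submodule ℝ (EuclideanSpace ℝ (Fin m)) :=
  Submodule.span ℝ (v '' {i | i < j})

/-- `a_j`, the distance of `v j` from the span of the previous vectors. -/
noncomputable def gsDist (m : ℕ) (v : Fin m → EuclideanSpace ℝ (Fin m)) (j : Fin m) : ℝ :=
  Metric.infDist (v j) (gsSpan m v j : Set (EuclideanSpace ℝ (Fin m)))

/-- The (unnormalized) Gram–Schmidt vector `a_j φ_j = v_j - proj_{V_{j-1}} v_j`. -/
noncomputable def gsVec (m : ℕ) (v : Fin m → EuclideanSpace ℝ (Fin m)) (j : Fin m) :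
    EuclideanSpace ℝ (Fin m) :=
  v j - (Submodule.orthogonalProjectionOnto (gsSpan m v j) (v j) : EuclideanSpace ℝ (Fin m))

/-- The basis `v` is reduced: (1) each `v_j` has minimal distance to `V_{j-1}` among
lattice vectors outside `V_{j-1}`; (2) the Gram–Schmidt coefficients satisfy
`|n_{ij}| ≤ 1/2`, i.e. `|⟨v_j, a_i φ_i⟩| ≤ a_i²/2`. -/
def IsReducedBasis (m : ℕ) (v : Fin m → EuclideanSpace ℝ (Fin m)) : Prop :=
  (∀ (j : Fin m) (c : Fin m → ℤ),
      (∑ i, c i • v i) ∉ gsSpan m v j →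
      gsDist m v j ≤
        Metric.infDist (∑ i, c i • v i) (gsSpan m v j : Set (EuclideanSpace ℝ (Fin m)))) ∧
  (∀ i j : Fin m, i < j → |⟪v j, gsVec m v i⟫| ≤ ‖gsVec m v i‖ ^ 2 / 2)

/-! Write `u = a_j φ_j`. Since `V_j = V_{j-1} ⊕ ℝ u` orthogonally, the component of `v_{j+1}`
orthogonal to `V_{j-1}` is `a_{j+1} φ_{j+1} + n u` with `|n| ≤ 1/2` by condition (2), so
`dist(v_{j+1}, V_{j-1})² ≤ a_{j+1}² + a_j²/4`. Condition (1), applied to the lattice vector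
`v_{j+1} ∉ V_{j-1}`, gives `a_j ≤ dist(v_{j+1}, V_{j-1})`, hence `3 a_j²/4 ≤ a_{j+1}²`. -/

section OrthogonalStep

variable {E : Type*} [NormedAddCommGroup E] [InnerProductSpace ℝ E]

theorem Submodule.mem_of_mem_sup_span_singleton_of_inner_eq_zero {K : Submodule ℝ E} {u p : E}
    (hu : u ∈ Kᗮ) (hp : p ∈ K ⊔ ℝ ∙ u) (hpu : ⟪p, u⟫ = 0) : p ∈ K := by
  obtain ⟨k, hk, z, hz, rfl⟩ := Submodule.mem_sup.mp hp
  obtain ⟨t, rfl⟩ := Submodule.mem_span_singleton.mp hz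
  have hku : ⟪k, u⟫ = 0 := (K.mem_orthogonal u).mp hu k hk
  have htu : t * ‖u‖ ^ 2 = 0 := by
    rwa [inner_add_left, hku, real_inner_smul_left, real_inner_self_eq_norm_sq, zero_add] at hpu
  rcases mul_eq_zero.mp htu with rfl | hu0
  · simpa using hk
  · simpa [norm_eq_zero.mp (pow_eq_zero_iff two_ne_zero |>.mp hu0)] using hk

theorem Submodule.infDist_sq_le_of_eq_sup_span_singleton {K K' : Submodule ℝ E}
    [K'.HasOrthogonalProjection] {u : E} (hu : u ∈ Kᗮ) (hK' : K' = K ⊔ ℝ ∙ u) (y : E) :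
    Metric.infDist y K ^ 2 ≤ ‖y - K'.starProjection y‖ ^ 2 + ⟪y, u⟫ ^ 2 / ‖u‖ ^ 2 := by
  set w := y - K'.starProjection y
  set n := ⟪y, u⟫ / ‖u‖ ^ 2
  have huK' : u ∈ K' := hK' ▸ Submodule.mem_sup_right (Submodule.mem_span_singleton_self u)
  have hwu : ⟪w, u⟫ = 0 := K'.starProjection_inner_eq_zero y u huK'
  have hnu : n * ‖u‖ ^ 2 = ⟪y, u⟫ := by
    rcases eq_or_ne u 0 with rfl | hu0
    · simp
    · exact div_mul_cancel₀ _ (by positivity)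
  have hmem : K'.starProjection y - n • u ∈ K := by
    refine Submodule.mem_of_mem_sup_span_singleton_of_inner_eq_zero hu ?_ ?_
    · exact hK' ▸ K'.sub_mem (K'.starProjection_apply_mem y) (K'.smul_mem n huK')
    · have : ⟪K'.starProjection y, u⟫ = ⟪y, u⟫ := by
        rw [K'.inner_starProjection_left_eq_right, K'.starProjection_eq_self_iff.mpr huK']
      rw [inner_sub_left, this, real_inner_smul_left, real_inner_self_eq_norm_sq, hnu, sub_self]
  have hdist : Metric.infDist y K ≤ ‖w + n • u‖ := by
    have hyw : y - (K'.starProjection y - n • u) = w + n • u := by simp only [w]; abel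
    simpa only [dist_eq_norm, hyw] using Metric.infDist_le_dist_of_mem (x := y) hmem
  calc Metric.infDist y K ^ 2 ≤ ‖w + n • u‖ ^ 2 := by
        gcongr; exact Metric.infDist_nonneg
    _ = ‖w‖ ^ 2 + n * ⟪y, u⟫ := by
        rw [norm_add_sq_real, real_inner_smul_right, hwu, norm_smul, Real.norm_eq_abs, mul_pow,
          sq_abs, ← hnu]
        ring
    _ = ‖w‖ ^ 2 + ⟪y, u⟫ ^ 2 / ‖u‖ ^ 2 := by ring

end OrthogonalStep

theorem sqrt_three_div_two_mul_le {a b : ℝ} (hb : 0 ≤ b) (h : a ^ 2 ≤ b ^ 2 + a ^ 2 / 4) :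
    Real.sqrt 3 / 2 * a ≤ b := by
  have h3 : Real.sqrt 3 ^ 2 = 3 := Real.sq_sqrt (by norm_num)
  refine abs_le_of_sq_le_sq' ?_ hb |>.2
  nlinarith

theorem sq_div_sq_le_of_abs_le {x r : ℝ} (h : |x| ≤ r ^ 2 / 2) : x ^ 2 / r ^ 2 ≤ r ^ 2 / 4 := by
  rcases eq_or_ne r 0 with rfl | hr
  · simp
  rw [div_le_iff₀ (by positivity), ← sq_abs]
  nlinarith [abs_nonneg x]

theorem Submodule.sup_span_singleton_sub_of_mem {R M : Type*} [Ring R] [AddCommGroup M]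
    [Module R M] {K : Submodule R M} {p : M} (hp : p ∈ K) (x : M) :
    K ⊔ R ∙ (x - p) = K ⊔ R ∙ x := by
  refine le_antisymm (sup_le le_sup_left ?_) (sup_le le_sup_left ?_) <;>
    rw [Submodule.span_singleton_le_iff_mem]
  · exact sub_mem (mem_sup_right (mem_span_singleton_self x)) (mem_sup_left hp)
  · simpa using add_mem (mem_sup_right (mem_span_singleton_self (x - p))) (mem_sup_left hp)

section GramSchmidt

variable {m : ℕ} (v : Fin m → EuclideanSpace ℝ (Fin m))

theorem gsVec_eq_sub_starProjection (j : Fin m) :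
    gsVec m v j = v j - (gsSpan m v j).starProjection (v j) :=
  rfl

theorem gsVec_mem_orthogonal (j : Fin m) : gsVec m v j ∈ (gsSpan m v j)ᗮ :=
  Submodule.sub_starProjection_mem_orthogonal (v j)

theorem gsDist_eq_norm_gsVec (j : Fin m) : gsDist m v j = ‖gsVec m v j‖ := by
  rw [gsDist, Metric.infDist_eq_iInf, gsVec_eq_sub_starProjection v,
    Submodule.starProjection_minimal]
  simp only [dist_eq_norm]
  rfl

theorem gsSpan_succ (j : Fin m) (hj : (j : ℕ) + 1 < m) :
    gsSpan m v ⟨j + 1, hj⟩ = gsSpan m v j ⊔ ℝ ∙ gsVec m v j := by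
  have hlt : {i : Fin m | i < ⟨j + 1, hj⟩} = insert j {i | i < j} := by
    ext i
    simp only [Set.mem_ofPred_eq, Set.mem_insert_iff, Fin.lt_def, Fin.ext_iff]
    omega
  rw [gsSpan, hlt, Set.image_insert_eq, Submodule.span_insert, sup_comm,
    gsVec_eq_sub_starProjection v, Submodule.sup_span_singleton_sub_of_mem
      (Submodule.starProjection_apply_mem _ _)]
  rfl

variable {v} in
theorem LinearIndependent.notMem_gsSpan (hv : LinearIndependent ℝ v) {j k : Fin m} (h : j ≤ k) :
    v k ∉ gsSpan m v j :=
  hv.notMem_span_image (by simpa using h)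

variable {v} in
theorem IsReducedBasis.gsDist_le_infDist (hred : IsReducedBasis m v) {j k : Fin m}
    (hk : v k ∉ gsSpan m v j) :
    gsDist m v j ≤ Metric.infDist (v k) (gsSpan m v j) := by
  simpa using hred.1 j (Pi.single k 1) (by simpa using hk)

end GramSchmidt

/-- For a reduced basis, `(√3/2) a_j ≤ a_{j+1}`. -/
theorem stmt5 (m : ℕ) (v : Fin m → EuclideanSpace ℝ (Fin m))
    (hv : LinearIndependent ℝ v) (hred : IsReducedBasis m v)
    (j : Fin m) (hj : (j : ℕ) + 1 < m) :
    Real.sqrt 3 / 2 * gsDist m v j ≤ gsDist m v ⟨(j : ℕ) + 1, hj⟩ := by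
  set j' : Fin m := ⟨j + 1, hj⟩
  have hjj' : j < j' := Fin.lt_def.mpr (Nat.lt_succ_self j)
  set u := gsVec m v j
  have hmin : ‖u‖ ≤ Metric.infDist (v j') (gsSpan m v j) :=
    gsDist_eq_norm_gsVec v j ▸ hred.gsDist_le_infDist (hv.notMem_gsSpan hjj'.le)
  have hsplit := Submodule.infDist_sq_le_of_eq_sup_span_singleton (gsVec_mem_orthogonal v j)
    (gsSpan_succ v j hj) (v j')
  have hsize : ⟪v j', u⟫ ^ 2 / ‖u‖ ^ 2 ≤ ‖u‖ ^ 2 / 4 := sq_div_sq_le_of_abs_le (hred.2 j j' hjj')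
  rw [← gsVec_eq_sub_starProjection v] at hsplit
  rw [gsDist_eq_norm_gsVec v, gsDist_eq_norm_gsVec v]
  refine sqrt_three_div_two_mul_le (norm_nonneg _) ?_
  calc ‖u‖ ^ 2 ≤ Metric.infDist (v j') (gsSpan m v j) ^ 2 := by gcongr
    _ ≤ _ := hsplit.trans (by gcongr)
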